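/- arXiv:2602.22679 — 4 statements merged into one kernel-verified Lean document; each statement's English description precedes it below -/
import Mathlib

section
/- Let κ be a positive definite kernel on Ω, x_1,…,x_N ∈ Ω distinct, kernel matrix K invertible, and σ_n² > 0. Define the noisy GP posterior mean f*_noise(z) = K_X(z)(K + σ_n² I)^{-1} Y with Y_j = f(x_j), and the noisy predictive variance Var(z) = κ(z,z) − K_X(z)(K + σ_n² I)^{-1} K_X(z)^T. Then for every f in the native RKHS of κ and every z ∈ Ω there is a constant C ≥ 0 (independent of z) such that |f(z) − f*_noise(z)|² ≤ C · Var(z). -/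
open Matrix

open scoped InnerProductSpace

/-!
Write `v j = Φ (x j)`, `u = Φ z`, `k = (⟪v i, u⟫)ᵢ` and `w = (K + σ² I)⁻¹ k`. Since `K` is a Gram
matrix it is positive semidefinite, so `K + σ² I` is positive definite for `σ² > 0`. By the
reproducing property and the symmetry of `(K + σ² I)⁻¹`, the error `f(z) − f*_noise(z)` equals
`⟪f, u − ∑ⱼ w j • v j⟫`, so Cauchy–Schwarz bounds its square by `‖f‖² ‖u − ∑ⱼ w j • v j‖²`.
Expanding the norm with `K w = k − σ² w` gives `‖u − ∑ⱼ w j • v j‖² = Var(z) − σ² ‖w‖² ≤ Var(z)`,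
so `C = ‖f‖²` works.
-/

theorem Matrix.IsSymm.dotProduct_mulVec_comm {ι R : Type*} [Fintype ι] [CommSemiring R]
    {A : Matrix ι ι R} (hA : A.IsSymm) (a b : ι → R) :
    a ⬝ᵥ (A *ᵥ b) = (A *ᵥ a) ⬝ᵥ b := by
  rw [dotProduct_mulVec, ← mulVec_transpose, hA]

section

variable {ι E : Type*} [Fintype ι] [NormedAddCommGroup E] [InnerProductSpace ℝ E]

theorem Matrix.posDef_gram_add_smul_one [DecidableEq ι] (v : ι → E) {σ : ℝ} (hσ : 0 < σ) :
    (gram ℝ v + σ • (1 : Matrix ι ι ℝ)).PosDef :=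
  PosDef.posSemidef_add (posSemidef_gram ℝ v) (PosDef.one.smul hσ)

theorem inner_sum_smul_left_eq_dotProduct (v : ι → E) (w : ι → ℝ) (u : E) :
    ⟪∑ j, w j • v j, u⟫_ℝ = w ⬝ᵥ fun i => ⟪v i, u⟫_ℝ := by
  simp only [sum_inner, real_inner_smul_left, dotProduct]

theorem inner_sum_smul_right_eq_dotProduct (v : ι → E) (w : ι → ℝ) (u : E) :
    ⟪u, ∑ j, w j • v j⟫_ℝ = w ⬝ᵥ fun i => ⟪u, v i⟫_ℝ := by
  simp only [inner_sum, real_inner_smul_right, dotProduct]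

theorem norm_sum_smul_sq_eq_dotProduct_gram_mulVec (v : ι → E) (w : ι → ℝ) :
    ‖∑ j, w j • v j‖ ^ 2 = w ⬝ᵥ (gram ℝ v *ᵥ w) := by
  rw [← real_inner_self_eq_norm_sq, ← star_dotProduct_gram_mulVec, star_trivial]

theorem norm_sub_sum_smul_sq_of_mulVec_eq [DecidableEq ι] (v : ι → E) (u : E) (σ : ℝ)
    {w : ι → ℝ} (hw : (gram ℝ v + σ • 1) *ᵥ w = fun i => ⟪v i, u⟫_ℝ) :
    ‖u - ∑ j, w j • v j‖ ^ 2 = ⟪u, u⟫_ℝ - (fun i => ⟪v i, u⟫_ℝ) ⬝ᵥ w - σ * (w ⬝ᵥ w) := by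
  have hgram : w ⬝ᵥ (gram ℝ v *ᵥ w) = (fun i => ⟪v i, u⟫_ℝ) ⬝ᵥ w - σ * (w ⬝ᵥ w) := by
    rw [← hw, add_mulVec, smul_mulVec, one_mulVec, add_dotProduct, smul_dotProduct, smul_eq_mul,
      dotProduct_comm]
    ring
  rw [norm_sub_sq_real, norm_sum_smul_sq_eq_dotProduct_gram_mulVec, hgram, real_inner_comm,
    inner_sum_smul_left_eq_dotProduct, real_inner_self_eq_norm_sq, dotProduct_comm w]
  ring

variable [DecidableEq ι] (v : ι → E) {σ : ℝ} (hσ : 0 < σ) (u : E)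
include hσ

theorem inner_sub_dotProduct_inv_gram_add_smul_one (f : E) :
    ⟪f, u⟫_ℝ - (fun i => ⟪v i, u⟫_ℝ) ⬝ᵥ ((gram ℝ v + σ • 1)⁻¹ *ᵥ fun j => ⟪f, v j⟫_ℝ) =
      ⟪f, u - ∑ j, ((gram ℝ v + σ • 1)⁻¹ *ᵥ fun i => ⟪v i, u⟫_ℝ) j • v j⟫_ℝ := by
  have hsymm : (gram ℝ v + σ • 1)⁻¹.IsSymm := (posDef_gram_add_smul_one v hσ).inv.isHermitian
  rw [hsymm.dotProduct_mulVec_comm, inner_sub_right, inner_sum_smul_right_eq_dotProduct]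

theorem norm_sub_sum_smul_inv_gram_add_smul_one_sq_le :
    ‖u - ∑ j, ((gram ℝ v + σ • 1)⁻¹ *ᵥ fun i => ⟪v i, u⟫_ℝ) j • v j‖ ^ 2 ≤
      ⟪u, u⟫_ℝ - (fun i => ⟪v i, u⟫_ℝ) ⬝ᵥ ((gram ℝ v + σ • 1)⁻¹ *ᵥ fun i => ⟪v i, u⟫_ℝ) := by
  set w := (gram ℝ v + σ • 1)⁻¹ *ᵥ fun i => ⟪v i, u⟫_ℝ
  have hdet : IsUnit (gram ℝ v + σ • 1).det :=
    (isUnit_iff_isUnit_det _).mp (posDef_gram_add_smul_one v hσ).isUnit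
  have hw : (gram ℝ v + σ • 1) *ᵥ w = fun i => ⟪v i, u⟫_ℝ := by
    rw [mulVec_mulVec, mul_nonsing_inv _ hdet, one_mulVec]
  rw [norm_sub_sum_smul_sq_of_mulVec_eq v u σ hw]
  exact sub_le_self _ (mul_nonneg hσ.le (by simpa using dotProduct_self_star_nonneg w))

theorem sq_abs_inner_sub_dotProduct_inv_gram_add_smul_one_le (f : E) :
    |⟪f, u⟫_ℝ - (fun i => ⟪v i, u⟫_ℝ) ⬝ᵥ ((gram ℝ v + σ • 1)⁻¹ *ᵥ fun j => ⟪f, v j⟫_ℝ)| ^ 2 ≤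
      ‖f‖ ^ 2 *
        (⟪u, u⟫_ℝ - (fun i => ⟪v i, u⟫_ℝ) ⬝ᵥ ((gram ℝ v + σ • 1)⁻¹ *ᵥ fun i => ⟪v i, u⟫_ℝ)) := by
  rw [inner_sub_dotProduct_inv_gram_add_smul_one v hσ]
  calc _ ≤ (‖f‖ * ‖u - ∑ j, ((gram ℝ v + σ • 1)⁻¹ *ᵥ fun i => ⟪v i, u⟫_ℝ) j • v j‖) ^ 2 :=
        pow_le_pow_left₀ (abs_nonneg _) (abs_real_inner_le_norm _ _) 2
    _ ≤ _ := by
      rw [mul_pow]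
      exact mul_le_mul_of_nonneg_left (norm_sub_sum_smul_inv_gram_add_smul_one_sq_le v hσ u)
        (sq_nonneg _)

end

theorem stmt6_general {Ω H : Type*} [NormedAddCommGroup H] [InnerProductSpace ℝ H]
    (Φ : Ω → H) (ev : H → Ω → ℝ)
    (hrepro : ∀ (f : H) (y : Ω), ev f y = (inner ℝ f (Φ y) : ℝ))
    {N : ℕ} (x : Fin N → Ω)
    (K : Matrix (Fin N) (Fin N) ℝ)
    (hKdef : ∀ i j, K i j = (inner ℝ (Φ (x i)) (Φ (x j)) : ℝ))
    (σsq : ℝ) (hσ : 0 < σsq) (f : H) :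
    ∃ C : ℝ, 0 ≤ C ∧ ∀ z : Ω,
      |ev f z -
          (fun i => (inner ℝ (Φ (x i)) (Φ z) : ℝ)) ⬝ᵥ
            ((K + σsq • (1 : Matrix (Fin N) (Fin N) ℝ))⁻¹ *ᵥ fun j => ev f (x j))| ^ 2
        ≤ C *
          ((inner ℝ (Φ z) (Φ z) : ℝ) -
            (fun i => (inner ℝ (Φ (x i)) (Φ z) : ℝ)) ⬝ᵥ
              ((K + σsq • (1 : Matrix (Fin N) (Fin N) ℝ))⁻¹ *ᵥ
                fun i => (inner ℝ (Φ (x i)) (Φ z) : ℝ))) := by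
  obtain rfl : K = gram ℝ (Φ ∘ x) := Matrix.ext hKdef
  simp only [hrepro]
  exact ⟨‖f‖ ^ 2, sq_nonneg _, fun z =>
    sq_abs_inner_sub_dotProduct_inv_gram_add_smul_one_le (Φ ∘ x) hσ (Φ z) f⟩

/-- Error bound for GPR with noise regularization: there is `C ≥ 0` with
`|f(z) − f*_noise(z)|² ≤ C ⋅ Var_noise(z)` for all `z`. -/
theorem stmt6 {Ω H : Type*} [NormedAddCommGroup H] [InnerProductSpace ℝ H]
    (Φ : Ω → H) (ev : H → Ω → ℝ)
    (hrepro : ∀ (f : H) (y : Ω), ev f y = (inner ℝ f (Φ y) : ℝ))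
    (hpd : ∀ (M : ℕ) (y : Fin M → Ω), Function.Injective y →
      ∀ α : Fin M → ℝ, α ≠ 0 →
        0 < ∑ i, ∑ j, α i * α j * (inner ℝ (Φ (y i)) (Φ (y j)) : ℝ))
    {N : ℕ} (x : Fin N → Ω) (hx : Function.Injective x)
    (K : Matrix (Fin N) (Fin N) ℝ)
    (hKdef : ∀ i j, K i j = (inner ℝ (Φ (x i)) (Φ (x j)) : ℝ))
    (hK : IsUnit K)
    (σsq : ℝ) (hσ : 0 < σsq) (f : H) :
    ∃ C : ℝ, 0 ≤ C ∧ ∀ z : Ω,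
      |ev f z -
          (fun i => (inner ℝ (Φ (x i)) (Φ z) : ℝ)) ⬝ᵥ
            ((K + σsq • (1 : Matrix (Fin N) (Fin N) ℝ))⁻¹ *ᵥ fun j => ev f (x j))| ^ 2
        ≤ C *
          ((inner ℝ (Φ z) (Φ z) : ℝ) -
            (fun i => (inner ℝ (Φ (x i)) (Φ z) : ℝ)) ⬝ᵥ
              ((K + σsq • (1 : Matrix (Fin N) (Fin N) ℝ))⁻¹ *ᵥ
                fun i => (inner ℝ (Φ (x i)) (Φ z) : ℝ))) :=
  stmt6_general Φ ev hrepro x K hKdef σsq hσ f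
end

section
/- Let λ_min ≤ λ_max < 0 and ω_opt = 2/(λ_max + λ_min). If ω* satisfies |ω* − ω_opt| < −2 λ_max / (λ_min (λ_max + λ_min)), then max{|1 − ω* λ_min|, |1 − ω* λ_max|} < 1. -/
/-- Convergence condition for weighted Jacobi with approximate `ω*` (negative spectrum). -/
theorem stmt10 (lmin lmax : ℝ) (hle : lmin ≤ lmax) (h0 : lmax < 0)
    (ω : ℝ) (hω : |ω - 2 / (lmax + lmin)| < -2 * lmax / (lmin * (lmax + lmin))) :
    max |1 - ω * lmin| |1 - ω * lmax| < 1 := by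
  have hmin : lmin < 0 := by linarith
  have hs : lmax + lmin < 0 := by linarith
  have hmin' : lmin ≠ 0 := ne_of_lt hmin
  have hs' : lmax + lmin ≠ 0 := ne_of_lt hs
  rw [abs_lt] at hω
  obtain ⟨h1, h2⟩ := hω
  have e1 : 2 / (lmax + lmin) - (-2 * lmax / (lmin * (lmax + lmin))) = 2 / lmin := by
    field_simp
    ring
  have key1 : 2 / lmin < ω := by linarith
  have key1' : ω * lmin < 2 := by
    have := (div_lt_iff_of_neg hmin).mp key1
    linarith
  have e2 : 2 / (lmax + lmin) + (-2 * lmax / (lmin * (lmax + lmin)))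
      = (2 * lmin - 2 * lmax) / (lmin * (lmax + lmin)) := by
    field_simp
    ring
  have hpos : 0 < lmin * (lmax + lmin) := mul_pos_of_neg_of_neg hmin hs
  have key2 : ω < 0 := by
    have hub : ω < (2 * lmin - 2 * lmax) / (lmin * (lmax + lmin)) := by linarith
    have : (2 * lmin - 2 * lmax) / (lmin * (lmax + lmin)) ≤ 0 :=
      div_nonpos_of_nonpos_of_nonneg (by linarith) (le_of_lt hpos)
    linarith
  have key3 : ω * lmax < 2 := by nlinarith
  have p1 : 0 < ω * lmin := mul_pos_of_neg_of_neg key2 hmin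
  have p2 : 0 < ω * lmax := mul_pos_of_neg_of_neg key2 h0
  rw [max_lt_iff, abs_lt, abs_lt]
  constructor <;> constructor <;> linarith
end

section
/- Let 0 < λ_min ≤ λ_max, ω_opt = 2/(λ_max+λ_min), and suppose C, V ≥ 0 with |ω* − ω_opt| ≤ C·V and C·V ≤ 2λ_min/(λ_max(λ_max+λ_min)). Then max{|1 − ω* λ_min|, |1 − ω* λ_max|} ≤ (λ_max − λ_min)/(λ_max+λ_min) + 2λ_min/(λ_max+λ_min), and if moreover C·V < 2λ_min/(λ_max(λ_max+λ_min)), then max{|1 − ω* λ_min|, |1 − ω* λ_max|} < 1. -/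
/-- GPR-based weighted Jacobi convergence: with `|ω* − ω_opt| ≤ C·V` and
`C·V ≤ 2λmin/(λmax(λmax+λmin))`, the spectral bound is at most `1`, and strictly
less than `1` if the bound on `C·V` is strict. -/
theorem stmt16 (lmin lmax : ℝ) (h0 : 0 < lmin) (hle : lmin ≤ lmax)
    (ω C V : ℝ) (hC : 0 ≤ C) (hV : 0 ≤ V)
    (hω : |ω - 2 / (lmax + lmin)| ≤ C * V)
    (hCV : C * V ≤ 2 * lmin / (lmax * (lmax + lmin))) :
    max |1 - ω * lmin| |1 - ω * lmax|
        ≤ (lmax - lmin) / (lmax + lmin) + 2 * lmin / (lmax + lmin) ∧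
      (C * V < 2 * lmin / (lmax * (lmax + lmin)) →
        max |1 - ω * lmin| |1 - ω * lmax| < 1) := by
  have hl : 0 < lmax := lt_of_lt_of_le h0 hle
  have hs : 0 < lmax + lmin := by linarith
  have hls : 0 < lmax * (lmax + lmin) := by positivity
  obtain ⟨h1, h2⟩ := abs_le.mp hω
  have hcv' : C * V * (lmax * (lmax + lmin)) ≤ 2 * lmin :=
    (le_div_iff₀ hls).mp hCV
  have hcanc : 2 / (lmax + lmin) * (lmax + lmin) = 2 :=
    div_mul_cancel₀ 2 (ne_of_gt hs)
  -- from h1 : -(C*V) ≤ ω - 2/(lmax+lmin), multiply by s: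
  have hlo : 2 - C * V * (lmax + lmin) ≤ ω * (lmax + lmin) := by
    nlinarith [mul_le_mul_of_nonneg_right h1 hs.le]
  have hhi : ω * (lmax + lmin) ≤ 2 + C * V * (lmax + lmin) := by
    nlinarith [mul_le_mul_of_nonneg_right h2 hs.le]
  have hCVnn : 0 ≤ C * V := mul_nonneg hC hV
  have hω0 : 0 ≤ ω := by nlinarith
  have hRHS : (lmax - lmin) / (lmax + lmin) + 2 * lmin / (lmax + lmin) = 1 := by
    field_simp; ring
  constructor
  · rw [hRHS]
    have a1 : |1 - ω * lmin| ≤ 1 := by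
      rw [abs_le]; constructor <;> nlinarith
    have a2 : |1 - ω * lmax| ≤ 1 := by
      rw [abs_le]; constructor <;> nlinarith
    exact max_le a1 a2
  · intro hstrict
    have hcv'' : C * V * (lmax * (lmax + lmin)) < 2 * lmin :=
      (lt_div_iff₀ hls).mp hstrict
    have hmaxhi : ω * lmax < 2 := by
      nlinarith [mul_le_mul_of_nonneg_right hhi hl.le]
    have hminlo : 0 < ω * lmin := by
      nlinarith [mul_le_mul_of_nonneg_right hlo hl.le]
    have hmono : ω * lmin ≤ ω * lmax := mul_le_mul_of_nonneg_left hle hω0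
    have a1 : |1 - ω * lmin| < 1 := by
      rw [abs_lt]; constructor <;> linarith
    have a2 : |1 - ω * lmax| < 1 := by
      rw [abs_lt]; constructor <;> linarith
    exact max_lt a1 a2
end

section
/- Let f, f* : Ω → ℝ with ‖f − f*‖_{L^∞(Ω)} ≤ δ, and suppose f(z₀) = ω_opt for some z₀ ∈ Ω and ω* = f*(z₀). With 0 < λ_min ≤ λ_max, ω_opt = 2/(λ_max + λ_min), and δ ≤ 2λ_min/(λ_max(λ_max+λ_min)), the weighted Jacobi spectral bound satisfies max{|1−ω*λ_min|, |1−ω*λ_max|} ≤ (λ_max−λ_min)/(λ_max+λ_min) + δλ_max ≤ 1, with strict inequality if δ < 2λ_min/(λ_max(λ_max+λ_min)). -/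
/-- Sup-norm reduction: if `‖f − f*‖_∞ ≤ δ`, `f(z₀) = ω_opt` and `ω* = f*(z₀)`, then the
weighted Jacobi spectral bound is at most `(λmax−λmin)/(λmax+λmin) + δλmax ≤ 1`, with strict
inequality under a strict bound on `δ`. -/
theorem stmt18 {Ω : Type*} (f fstar : Ω → ℝ) (δ : ℝ)
    (hδ : ∀ z : Ω, |f z - fstar z| ≤ δ)
    (lmin lmax : ℝ) (h0 : 0 < lmin) (hle : lmin ≤ lmax)
    (z₀ : Ω) (hf : f z₀ = 2 / (lmax + lmin))
    (ω : ℝ) (hω : ω = fstar z₀)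
    (hδ' : δ ≤ 2 * lmin / (lmax * (lmax + lmin))) :
    max |1 - ω * lmin| |1 - ω * lmax|
        ≤ (lmax - lmin) / (lmax + lmin) + δ * lmax ∧
      (lmax - lmin) / (lmax + lmin) + δ * lmax ≤ 1 ∧
      (δ < 2 * lmin / (lmax * (lmax + lmin)) →
        max |1 - ω * lmin| |1 - ω * lmax| < 1) := by
  have hL : 0 < lmax := lt_of_lt_of_le h0 hle
  have hs : 0 < lmax + lmin := by linarith
  have he : |ω - 2 / (lmax + lmin)| ≤ δ := by
    rw [hω, ← hf, abs_sub_comm]; exact hδ z₀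
  obtain ⟨he1, he2⟩ := abs_le.1 he
  have hd0 : 0 ≤ δ := le_trans (abs_nonneg _) he
  set c : ℝ := (lmax - lmin) / (lmax + lmin) with hc
  have hcm : c * (lmax + lmin) = lmax - lmin := div_mul_cancel₀ _ hs.ne'
  have h2 : 2 / (lmax + lmin) * (lmax + lmin) = 2 := div_mul_cancel₀ _ hs.ne'
  have hδm : δ * (lmax * (lmax + lmin)) ≤ 2 * lmin :=
    (le_div_iff₀ (by positivity)).1 hδ'
  have hws1 : 2 - δ * (lmax + lmin) ≤ ω * (lmax + lmin) := by
    have := mul_le_mul_of_nonneg_right he1 hs.le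
    nlinarith [h2]
  have hws2 : ω * (lmax + lmin) ≤ 2 + δ * (lmax + lmin) := by
    have := mul_le_mul_of_nonneg_right he2 hs.le
    nlinarith [h2]
  have hmono : δ * (lmax + lmin) * lmin ≤ δ * (lmax + lmin) * lmax :=
    mul_le_mul_of_nonneg_left hle (by positivity)
  have hb1 : |1 - ω * lmin| ≤ c + δ * lmax := by
    rw [abs_le]
    constructor <;>
      nlinarith [mul_le_mul_of_nonneg_right hws1 h0.le,
        mul_le_mul_of_nonneg_right hws2 h0.le, hcm, hs, hmono,
        mul_pos hs h0]
  have hb2 : |1 - ω * lmax| ≤ c + δ * lmax := by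
    rw [abs_le]
    constructor <;>
      nlinarith [mul_le_mul_of_nonneg_right hws1 hL.le,
        mul_le_mul_of_nonneg_right hws2 hL.le, hcm, hs,
        mul_pos hs hL]
  have hmax : max |1 - ω * lmin| |1 - ω * lmax| ≤ c + δ * lmax := max_le hb1 hb2
  have hle1 : c + δ * lmax ≤ 1 := by
    nlinarith [hcm, hδm, hs]
  refine ⟨hmax, hle1, fun hstrict => ?_⟩
  have hδm' : δ * (lmax * (lmax + lmin)) < 2 * lmin :=
    (lt_div_iff₀ (by positivity)).1 hstrict
  have hlt : c + δ * lmax < 1 := by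
    nlinarith [hcm, hδm', hs]
  exact lt_of_le_of_lt hmax hlt
end
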